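/- Let r ∈ (0, π/2), and for d ∈ (0, π/2) define l(d) by cos l = cos²d − (1/2)sin²d, m(d) by cos m = cos d / cos(l/2), s(d) by cos s = cos r / cos m (for d with m(d) ≤ r), α(d) by cos α = (cos s − cos m·cos r)/(sin m·sin r), and f(d) = 6(2α(d)·sin r − 2s(d) + l(d)/2) − 2π·sin r. Then f is a well-defined continuous function of d on the interval where m(d) ≤ r ≤ d < π/2. -/

import Mathlib

/-- Side length of the regular spherical triangle with circumradius `d`. -/
noncomputable def sideLen (d : ℝ) : ℝ :=
  Real.arccos (Real.cos d ^ 2 - (1 / 2) * Real.sin d ^ 2)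

/-- Inradius of the regular spherical triangle with circumradius `d`. -/
noncomputable def inrad (d : ℝ) : ℝ :=
  Real.arccos (Real.cos d / Real.cos (sideLen d / 2))

/-- Half-arc `s(d)` for a circle of radius `r`. -/
noncomputable def halfArc (r d : ℝ) : ℝ :=
  Real.arccos (Real.cos r / Real.cos (inrad d))

/-- Central angle `α(d)`. -/
noncomputable def centAngle (r d : ℝ) : ℝ :=
  Real.arccos ((Real.cos (halfArc r d) - Real.cos (inrad d) * Real.cos r) /
    (Real.sin (inrad d) * Real.sin r))

/-- The perimeter deviation of the circle `K(r)` and the triangle `T(d)`. -/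
noncomputable def devFn (r d : ℝ) : ℝ :=
  6 * (2 * centAngle r d * Real.sin r - 2 * halfArc r d + sideLen d / 2) -
    2 * Real.pi * Real.sin r

lemma sideLen_arg_mem (d : ℝ) :
    Real.cos d ^ 2 - (1 / 2) * Real.sin d ^ 2 ∈ Set.Icc (-1 : ℝ) 1 := by
  have h := Real.sin_sq_add_cos_sq d
  constructor <;> nlinarith [sq_nonneg (Real.sin d), sq_nonneg (Real.cos d)]

lemma cos_sideLen (d : ℝ) :
    Real.cos (sideLen d) = Real.cos d ^ 2 - (1 / 2) * Real.sin d ^ 2 :=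
  Real.cos_arccos (sideLen_arg_mem d).1 (sideLen_arg_mem d).2

lemma cos_half_sideLen_sq (d : ℝ) :
    Real.cos (sideLen d / 2) ^ 2 = (3 * Real.cos d ^ 2 + 1) / 4 := by
  have h := Real.cos_sq (sideLen d / 2)
  rw [mul_div_cancel₀ (sideLen d) (two_ne_zero), cos_sideLen] at h
  have hs := Real.sin_sq_add_cos_sq d
  nlinarith

lemma cos_half_sideLen_nonneg (d : ℝ) : 0 ≤ Real.cos (sideLen d / 2) := by
  apply Real.cos_nonneg_of_mem_Icc
  constructor
  · have := Real.arccos_nonneg (Real.cos d ^ 2 - (1 / 2) * Real.sin d ^ 2)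
    unfold sideLen; linarith [Real.pi_pos]
  · have := Real.arccos_le_pi (Real.cos d ^ 2 - (1 / 2) * Real.sin d ^ 2)
    unfold sideLen; linarith

lemma half_le_cos_half_sideLen (d : ℝ) : 1 / 2 ≤ Real.cos (sideLen d / 2) := by
  have h1 := cos_half_sideLen_sq d
  have h2 := cos_half_sideLen_nonneg d
  nlinarith [sq_nonneg (Real.cos d)]

section
variable {d : ℝ} (hd0 : 0 < d) (hd2 : d < Real.pi / 2)

include hd0 hd2

lemma cos_d_pos : 0 < Real.cos d :=
  Real.cos_pos_of_mem_Ioo ⟨by linarith [Real.pi_pos], hd2⟩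

lemma cos_d_lt_one : Real.cos d < 1 := by
  have := Real.cos_lt_cos_of_nonneg_of_le_pi (le_refl 0) (by linarith [Real.pi_pos]) hd0
  simpa using this

lemma inrad_arg_mem : Real.cos d / Real.cos (sideLen d / 2) ∈ Set.Icc (-1 : ℝ) 1 := by
  have h1 := cos_half_sideLen_sq d
  have h2 := half_le_cos_half_sideLen d
  have h3 := cos_d_pos hd0 hd2
  have hle : Real.cos d ≤ Real.cos (sideLen d / 2) := by nlinarith [Real.cos_le_one d]
  constructor
  · have : (0:ℝ) ≤ Real.cos d / Real.cos (sideLen d / 2) :=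
      div_nonneg h3.le (by linarith)
    linarith
  · rw [div_le_one (by linarith)]; exact hle

lemma inrad_arg_lt_one : Real.cos d / Real.cos (sideLen d / 2) < 1 := by
  have h1 := cos_half_sideLen_sq d
  have h2 := half_le_cos_half_sideLen d
  have h3 := cos_d_pos hd0 hd2
  have h4 := cos_d_lt_one hd0 hd2
  have hlt : Real.cos d < Real.cos (sideLen d / 2) := by nlinarith
  rw [div_lt_one (by linarith)]; exact hlt

lemma cos_inrad_eq : Real.cos (inrad d) = Real.cos d / Real.cos (sideLen d / 2) :=
  Real.cos_arccos (inrad_arg_mem hd0 hd2).1 (inrad_arg_mem hd0 hd2).2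

lemma cos_inrad_pos : 0 < Real.cos (inrad d) := by
  rw [cos_inrad_eq hd0 hd2]
  exact div_pos (cos_d_pos hd0 hd2) (by linarith [half_le_cos_half_sideLen d])

lemma inrad_pos : 0 < inrad d :=
  Real.arccos_pos.mpr (inrad_arg_lt_one hd0 hd2)

lemma inrad_lt_pi_div_two : inrad d < Real.pi / 2 := by
  by_contra h
  push_neg at h
  have : Real.cos (inrad d) ≤ Real.cos (Real.pi / 2) :=
    Real.cos_le_cos_of_nonneg_of_le_pi (by positivity) (Real.arccos_le_pi _) h
  rw [Real.cos_pi_div_two] at this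
  exact absurd this (not_le.mpr (cos_inrad_pos hd0 hd2))

lemma sin_inrad_pos : 0 < Real.sin (inrad d) :=
  Real.sin_pos_of_pos_of_lt_pi (inrad_pos hd0 hd2)
    (by linarith [inrad_lt_pi_div_two hd0 hd2, Real.pi_pos])

end

section
variable {r d : ℝ} (hr0 : 0 < r) (hr2 : r < Real.pi / 2)
  (hm : inrad d ≤ r) (hrd : r ≤ d) (hd2 : d < Real.pi / 2)

include hr0 hr2 hm hrd hd2

lemma cos_r_le_cos_inrad : Real.cos r ≤ Real.cos (inrad d) :=
  Real.cos_le_cos_of_nonneg_of_le_pi (Real.arccos_nonneg _) (by linarith [Real.pi_pos]) hm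

lemma halfArc_arg_mem : Real.cos r / Real.cos (inrad d) ∈ Set.Icc (-1 : ℝ) 1 := by
  have hd0 : 0 < d := lt_of_lt_of_le hr0 hrd
  have hcm := cos_inrad_pos hd0 hd2
  have hcr : 0 < Real.cos r := Real.cos_pos_of_mem_Ioo ⟨by linarith [Real.pi_pos], hr2⟩
  have hle := cos_r_le_cos_inrad hr0 hr2 hm hrd hd2
  have h0 : (0:ℝ) ≤ Real.cos r / Real.cos (inrad d) := div_nonneg hcr.le hcm.le
  exact ⟨by linarith, (div_le_one hcm).mpr hle⟩

lemma cos_halfArc : Real.cos (halfArc r d) = Real.cos r / Real.cos (inrad d) :=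
  Real.cos_arccos (halfArc_arg_mem hr0 hr2 hm hrd hd2).1
    (halfArc_arg_mem hr0 hr2 hm hrd hd2).2

lemma centAngle_arg_eq :
    (Real.cos (halfArc r d) - Real.cos (inrad d) * Real.cos r) /
      (Real.sin (inrad d) * Real.sin r) =
    Real.cos r * Real.sin (inrad d) / (Real.cos (inrad d) * Real.sin r) := by
  have hd0 : 0 < d := lt_of_lt_of_le hr0 hrd
  have hcm := cos_inrad_pos hd0 hd2
  have hsm := sin_inrad_pos hd0 hd2
  have hsr : 0 < Real.sin r := Real.sin_pos_of_pos_of_lt_pi hr0 (by linarith [Real.pi_pos])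
  rw [cos_halfArc hr0 hr2 hm hrd hd2]
  have hpy := Real.sin_sq_add_cos_sq (inrad d)
  field_simp
  linear_combination (-(Real.cos r)) * hpy

lemma centAngle_arg_mem :
    (Real.cos (halfArc r d) - Real.cos (inrad d) * Real.cos r) /
      (Real.sin (inrad d) * Real.sin r) ∈ Set.Icc (-1 : ℝ) 1 := by
  have hd0 : 0 < d := lt_of_lt_of_le hr0 hrd
  have hcm := cos_inrad_pos hd0 hd2
  have hsm := sin_inrad_pos hd0 hd2
  have hsr : 0 < Real.sin r := Real.sin_pos_of_pos_of_lt_pi hr0 (by linarith [Real.pi_pos])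
  have hcr : 0 < Real.cos r := Real.cos_pos_of_mem_Ioo ⟨by linarith [Real.pi_pos], hr2⟩
  rw [centAngle_arg_eq hr0 hr2 hm hrd hd2]
  have hsin : 0 ≤ Real.sin (r - inrad d) :=
    Real.sin_nonneg_of_nonneg_of_le_pi (by linarith)
      (by have h0m : (0:ℝ) ≤ inrad d := Real.arccos_nonneg _
          linarith [Real.pi_pos])
  rw [Real.sin_sub] at hsin
  constructor
  · have : (0:ℝ) ≤ Real.cos r * Real.sin (inrad d) / (Real.cos (inrad d) * Real.sin r) := by
      positivity
    linarith
  · rw [div_le_one (by positivity)]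
    nlinarith

end

lemma continuous_sideLen : Continuous sideLen :=
  Real.continuous_arccos.comp (by fun_prop)

lemma continuous_inrad : Continuous inrad := by
  apply Real.continuous_arccos.comp
  apply Real.continuous_cos.div (Real.continuous_cos.comp (continuous_sideLen.div_const 2))
  intro d
  have := half_le_cos_half_sideLen d
  positivity

theorem dev_well_defined_continuous (r : ℝ) (hr : r ∈ Set.Ioo 0 (Real.pi / 2)) :
    (∀ d ∈ {d : ℝ | inrad d ≤ r ∧ r ≤ d ∧ d < Real.pi / 2},
      Real.cos d ^ 2 - (1 / 2) * Real.sin d ^ 2 ∈ Set.Icc (-1 : ℝ) 1 ∧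
      Real.cos d / Real.cos (sideLen d / 2) ∈ Set.Icc (-1 : ℝ) 1 ∧
      Real.cos r / Real.cos (inrad d) ∈ Set.Icc (-1 : ℝ) 1 ∧
      (Real.cos (halfArc r d) - Real.cos (inrad d) * Real.cos r) /
          (Real.sin (inrad d) * Real.sin r) ∈ Set.Icc (-1 : ℝ) 1) ∧
    ContinuousOn (devFn r) {d : ℝ | inrad d ≤ r ∧ r ≤ d ∧ d < Real.pi / 2} := by
  obtain ⟨hr0, hr2⟩ := hr
  constructor
  · rintro d ⟨hm, hrd, hd2⟩
    have hd0 : 0 < d := lt_of_lt_of_le hr0 hrd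
    exact ⟨sideLen_arg_mem d, inrad_arg_mem hd0 hd2,
      halfArc_arg_mem hr0 hr2 hm hrd hd2, centAngle_arg_mem hr0 hr2 hm hrd hd2⟩
  · have hcmne : ∀ d' ∈ {d : ℝ | inrad d ≤ r ∧ r ≤ d ∧ d < Real.pi / 2},
        Real.cos (inrad d') ≠ 0 := by
      rintro d' ⟨hm, hrd, hd2⟩
      exact ne_of_gt (cos_inrad_pos (lt_of_lt_of_le hr0 hrd) hd2)
    have hHalf : ContinuousOn (halfArc r)
        {d : ℝ | inrad d ≤ r ∧ r ≤ d ∧ d < Real.pi / 2} := by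
      apply Real.continuous_arccos.comp_continuousOn
      exact continuousOn_const.div
        ((Real.continuous_cos.comp continuous_inrad).continuousOn) hcmne
    have hCent : ContinuousOn (centAngle r)
        {d : ℝ | inrad d ≤ r ∧ r ≤ d ∧ d < Real.pi / 2} := by
      apply Real.continuous_arccos.comp_continuousOn
      apply ContinuousOn.div
      · exact (Real.continuous_cos.comp_continuousOn hHalf).sub
          (((Real.continuous_cos.comp continuous_inrad).continuousOn).mul continuousOn_const)
      · exact ((Real.continuous_sin.comp continuous_inrad).continuousOn).mul continuousOn_const
      · rintro d' ⟨hm, hrd, hd2⟩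
        have hd0 : 0 < d' := lt_of_lt_of_le hr0 hrd
        have hsm := sin_inrad_pos hd0 hd2
        have hsr : 0 < Real.sin r :=
          Real.sin_pos_of_pos_of_lt_pi hr0 (by linarith [Real.pi_pos])
        positivity
    unfold devFn
    apply ContinuousOn.sub _ continuousOn_const
    apply continuousOn_const.mul
    apply ContinuousOn.add
    · exact ((continuousOn_const.mul hCent).mul continuousOn_const).sub
        (continuousOn_const.mul hHalf)
    · exact (continuous_sideLen.continuousOn).div_const 2
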